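/- Let a : ℝ → ℝ be continuously differentiable, 1-periodic, and strictly positive. Then ⟨a⁻³a′·[[a·[[a⁻¹]]]]⟩ = ⟨a⁻¹·[[a·[[a⁻³a′]]]]⟩ = (1/2)⟨a⁻²⟩·⟨a⁻¹·[[a]]⟩. (This is the closed form of the homogenization coefficient C₇, up to the factor 1/ρ⁽⁰⁾, expressed via C₁ = ⟨a⁻¹·[[a]]⟩.) -/

import Mathlib

/-!
On continuous 1-periodic functions the pairing `(f, g) ↦ ⟨f [[g]]⟩` is antisymmetric: since
`⟨[[g]]⟩ = 0` and `{f} = [[f]]′`, the sum `⟨f [[g]]⟩ + ⟨g [[f]]⟩` is the mean of the derivative of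
the periodic function `[[f]] [[g]]`, which vanishes. Applying this twice, both sides of the first
identity equal `-⟨a [[a⁻¹]] [[a⁻³a′]]⟩`. As `-a⁻²/2` is a periodic primitive of `a⁻³a′`, we have
`[[a⁻³a′]] = (⟨a⁻²⟩ - a⁻²)/2`, so this mean is `⟨a⁻¹ [[a⁻¹]]⟩/2 - ⟨a⁻²⟩ ⟨a [[a⁻¹]]⟩/2`, and
antisymmetry once more gives `⟨a⁻¹ [[a⁻¹]]⟩ = 0` and `⟨a [[a⁻¹]]⟩ = -⟨a⁻¹ [[a]]⟩`.
-/
open MeasureTheory Matrix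

/-- The mean of a function over one period: `⟨b⟩ = ∫₀¹ b(y) dy`. -/
noncomputable def pmean (b : ℝ → ℝ) : ℝ := ∫ y in (0:ℝ)..1, b y

/-- The fluctuating (mean-zero) part: `{b} = b − ⟨b⟩`. -/
noncomputable def pfluct (b : ℝ → ℝ) : ℝ → ℝ := fun y => b y - pmean b

/-- The mean-zero primitive of the fluctuating part:
`[[b]](y) = ∫₀^y {b}(ξ) dξ − ∫₀¹ (∫₀^s {b}(ξ) dξ) ds`. -/
noncomputable def pbracket (b : ℝ → ℝ) : ℝ → ℝ :=
  fun y => (∫ ξ in (0:ℝ)..y, pfluct b ξ) - ∫ s in (0:ℝ)..1, (∫ ξ in (0:ℝ)..s, pfluct b ξ)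

open Function

theorem Function.Periodic.deriv {E : Type*} [NormedAddCommGroup E] [NormedSpace ℝ E]
    {f : ℝ → E} {c : ℝ} (hf : Periodic f c) : Periodic (deriv f) c := fun x => by
  rw [← deriv_comp_add_const, hf.funext]

section Means

variable {f g : ℝ → ℝ}

lemma pmean_add (hf : IntervalIntegrable f volume 0 1) (hg : IntervalIntegrable g volume 0 1) :
    pmean (fun y => f y + g y) = pmean f + pmean g :=
  intervalIntegral.integral_add hf hg

lemma pmean_const_mul (c : ℝ) (f : ℝ → ℝ) : pmean (fun y => c * f y) = c * pmean f :=
  intervalIntegral.integral_const_mul c f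

lemma pmean_eq_zero_of_hasDerivAt {u : ℝ → ℝ} (hu : ∀ y, HasDerivAt u (f y) y)
    (hf : IntervalIntegrable f volume 0 1) (hper : Periodic u 1) : pmean f = 0 := by
  rw [pmean, intervalIntegral.integral_eq_sub_of_hasDerivAt (fun y _ => hu y) hf,
    show u 1 = u 0 by simpa using hper 0, sub_self]

lemma continuous_pfluct (hf : Continuous f) : Continuous (pfluct f) :=
  hf.sub continuous_const

lemma Function.Periodic.pfluct {c : ℝ} (hf : Periodic f c) : Periodic (pfluct f) c :=
  fun x => by simp only [_root_.pfluct, hf x]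

lemma pmean_pfluct (hf : IntervalIntegrable f volume 0 1) : pmean (pfluct f) = 0 := by
  unfold pfluct
  rw [pmean, intervalIntegral.integral_sub hf intervalIntegrable_const]
  simp [pmean]

lemma hasDerivAt_pbracket (hf : Continuous f) (y : ℝ) :
    HasDerivAt (pbracket f) (pfluct f y) y :=
  ((continuous_pfluct hf).integral_hasStrictDerivAt 0 y).hasDerivAt.sub_const _

lemma continuous_pbracket (hf : Continuous f) : Continuous (pbracket f) :=
  continuous_iff_continuousAt.2 fun y => (hasDerivAt_pbracket hf y).continuousAt

lemma pmean_pbracket (hf : Continuous f) : pmean (pbracket f) = 0 := by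
  have hF := intervalIntegral.continuous_primitive (μ := volume)
    (fun a b => (continuous_pfluct hf).intervalIntegrable a b) 0
  unfold pbracket
  rw [pmean, intervalIntegral.integral_sub (hF.intervalIntegrable 0 1) intervalIntegrable_const]
  simp

lemma Function.Periodic.pbracket (hf : Continuous f) (hper : Periodic f 1) :
    Periodic (pbracket f) 1 := by
  intro x
  have hF := continuous_pfluct hf
  have hperiod : ∫ ξ in x..x + 1, _root_.pfluct f ξ = 0 := by
    rw [hper.pfluct.intervalIntegral_add_eq x 0, zero_add]
    exact pmean_pfluct (hf.intervalIntegrable 0 1)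
  simp only [_root_.pbracket]
  rw [← intervalIntegral.integral_add_adjacent_intervals (hF.intervalIntegrable 0 x)
    (hF.intervalIntegrable x (x + 1)), hperiod, add_zero]

end Means

section Antisymmetry

variable {f g : ℝ → ℝ}

lemma pmean_mul_pbracket_eq_pmean_pfluct_mul (hf : Continuous f) (hg : Continuous g) :
    pmean (fun y => f y * pbracket g y) = pmean (fun y => pfluct f y * pbracket g y) := by
  have hG := continuous_pbracket hg
  have hsplit : (fun y => f y * pbracket g y)
      = fun y => pfluct f y * pbracket g y + pmean f * pbracket g y := by
    funext y; simp only [pfluct]; ring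
  rw [hsplit, pmean_add (((continuous_pfluct hf).fun_mul hG).intervalIntegrable 0 1)
    ((continuous_const.fun_mul hG).intervalIntegrable 0 1), pmean_const_mul, pmean_pbracket hg,
    mul_zero, add_zero]

lemma pmean_mul_pbracket_antisymm (hf : Continuous f) (hg : Continuous g)
    (hfp : Periodic f 1) (hgp : Periodic g 1) :
    pmean (fun y => f y * pbracket g y) = -pmean (fun y => g y * pbracket f y) := by
  have hFG := (continuous_pfluct hf).fun_mul (continuous_pbracket hg)
  have hGF := (continuous_pfluct hg).fun_mul (continuous_pbracket hf)
  have hderiv : ∀ y, HasDerivAt (fun y => pbracket f y * pbracket g y)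
      (pfluct f y * pbracket g y + pfluct g y * pbracket f y) y := fun y =>
    ((hasDerivAt_pbracket hf y).mul (hasDerivAt_pbracket hg y)).congr_deriv (by ring)
  have hsum := pmean_eq_zero_of_hasDerivAt hderiv ((hFG.add hGF).intervalIntegrable 0 1)
    ((hfp.pbracket hf).mul (hgp.pbracket hg))
  rw [pmean_add (hFG.intervalIntegrable 0 1) (hGF.intervalIntegrable 0 1)] at hsum
  rw [pmean_mul_pbracket_eq_pmean_pfluct_mul hf hg, pmean_mul_pbracket_eq_pmean_pfluct_mul hg hf]
  linarith

lemma pmean_mul_pbracket_self (hf : Continuous f) (hfp : Periodic f 1) :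
    pmean (fun y => f y * pbracket f y) = 0 := by
  linarith [pmean_mul_pbracket_antisymm hf hf hfp hfp]

lemma pmean_mul_pbracket_mul_pbracket_comm {k : ℝ → ℝ} (hf : Continuous f) (hg : Continuous g)
    (hk : Continuous k) (hfp : Periodic f 1) (hgp : Periodic g 1) (hkp : Periodic k 1) :
    pmean (fun y => f y * pbracket (fun z => k z * pbracket g z) y)
      = pmean (fun y => g y * pbracket (fun z => k z * pbracket f z) y) := by
  rw [pmean_mul_pbracket_antisymm hf (hk.fun_mul (continuous_pbracket hg)) hfp
      (hkp.mul (hgp.pbracket hg)),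
    pmean_mul_pbracket_antisymm hg (hk.fun_mul (continuous_pbracket hf)) hgp
      (hkp.mul (hfp.pbracket hf))]
  congr 2
  funext y
  ring

end Antisymmetry

lemma pbracket_eq_pfluct_of_hasDerivAt {f u : ℝ → ℝ} (hf : Continuous f)
    (hu : ∀ y, HasDerivAt u (f y) y) (hper : Periodic u 1) : pbracket f = pfluct u := by
  have hu_cont : Continuous u := continuous_iff_continuousAt.2 fun y => (hu y).continuousAt
  have hfl : pfluct f = f := by
    funext y
    simp [pfluct, pmean_eq_zero_of_hasDerivAt hu (hf.intervalIntegrable 0 1) hper]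
  have hprim : ∀ y : ℝ, ∫ ξ in (0:ℝ)..y, f ξ = u y - u 0 := fun y =>
    intervalIntegral.integral_eq_sub_of_hasDerivAt (fun t _ => hu t) (hf.intervalIntegrable _ _)
  funext y
  simp only [pbracket, hfl, hprim]
  rw [intervalIntegral.integral_sub (hu_cont.intervalIntegrable _ _) intervalIntegrable_const]
  simp [pfluct, pmean]

lemma pbracket_inv_pow_three_mul_deriv {a : ℝ → ℝ} (ha : ContDiff ℝ 1 a) (hper : Periodic a 1)
    (ha0 : ∀ y, a y ≠ 0) :
    pbracket (fun w => (a w ^ 3)⁻¹ * deriv a w)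
      = fun y => (pmean (fun w => (a w ^ 2)⁻¹) - (a y ^ 2)⁻¹) / 2 := by
  have hprim : ∀ y, HasDerivAt (fun w => -(1 / 2) * (a w ^ 2)⁻¹) ((a y ^ 3)⁻¹ * deriv a y) y := by
    intro y
    have hsq := (((ha.differentiable one_ne_zero y).hasDerivAt.fun_pow 2).inv
      (pow_ne_zero 2 (ha0 y))).const_mul (-(1 / 2) : ℝ)
    refine hsq.congr_deriv ?_
    have := ha0 y
    field_simp
    ring
  have hq : Continuous fun w => (a w ^ 3)⁻¹ * deriv a w :=
    ((ha.continuous.pow 3).inv₀ fun y => pow_ne_zero 3 (ha0 y)).fun_mul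
      (ha.continuous_deriv le_rfl)
  rw [pbracket_eq_pfluct_of_hasDerivAt hq hprim fun x => by simp only [hper x]]
  funext y
  simp only [pfluct, pmean_const_mul]
  ring

/-- For `a` continuously differentiable, 1-periodic and strictly positive,
`⟨a⁻³a′·[[a·[[a⁻¹]]]]⟩ = ⟨a⁻¹·[[a·[[a⁻³a′]]]]⟩ = (1/2)⟨a⁻²⟩·⟨a⁻¹·[[a]]⟩`. -/
theorem statement9 (a : ℝ → ℝ) (ha : ContDiff ℝ 1 a) (hper : Function.Periodic a 1)
    (hpos : ∀ y, 0 < a y) :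
    pmean (fun y => (a y ^ 3)⁻¹ * deriv a y
        * pbracket (fun z => a z * pbracket (fun w => (a w)⁻¹) z) y)
      = pmean (fun y => (a y)⁻¹
          * pbracket (fun z => a z * pbracket (fun w => (a w ^ 3)⁻¹ * deriv a w) z) y) ∧
    pmean (fun y => (a y ^ 3)⁻¹ * deriv a y
        * pbracket (fun z => a z * pbracket (fun w => (a w)⁻¹) z) y)
      = (1/2) * pmean (fun y => (a y ^ 2)⁻¹) * pmean (fun y => (a y)⁻¹ * pbracket a y) := by
  have ha0 : ∀ y, a y ≠ 0 := fun y => (hpos y).ne'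
  have hac := ha.continuous
  have hinv : Continuous fun y => (a y)⁻¹ := hac.inv₀ ha0
  have hinvp : Periodic (fun y => (a y)⁻¹) 1 := fun x => by simp only [hper x]
  have hq : Continuous fun w => (a w ^ 3)⁻¹ * deriv a w :=
    ((hac.pow 3).inv₀ fun y => pow_ne_zero 3 (ha0 y)).fun_mul (ha.continuous_deriv le_rfl)
  have hqp : Periodic (fun w => (a w ^ 3)⁻¹ * deriv a w) 1 := fun x => by
    simp only [hper x, hper.deriv x]
  have hP := hac.fun_mul (continuous_pbracket hinv)
  refine ⟨pmean_mul_pbracket_mul_pbracket_comm hq hinv hac hqp hinvp hper, ?_⟩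
  have hsplit : (fun y => a y * pbracket (fun w => (a w)⁻¹) y
      * ((pmean (fun w => (a w ^ 2)⁻¹) - (a y ^ 2)⁻¹) / 2))
      = fun y => pmean (fun w => (a w ^ 2)⁻¹) / 2 * (a y * pbracket (fun w => (a w)⁻¹) y)
        + (-1 / 2) * ((a y)⁻¹ * pbracket (fun w => (a w)⁻¹) y) := by
    funext y
    have := ha0 y
    field_simp
    ring
  rw [pmean_mul_pbracket_antisymm hq hP hqp (hper.mul (hinvp.pbracket hinv)),
    pbracket_inv_pow_three_mul_deriv ha hper ha0, hsplit,
    pmean_add ((continuous_const.fun_mul hP).intervalIntegrable 0 1)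
      ((continuous_const.fun_mul (hinv.fun_mul (continuous_pbracket hinv))).intervalIntegrable
        0 1),
    pmean_const_mul, pmean_const_mul, pmean_mul_pbracket_self hinv hinvp,
    pmean_mul_pbracket_antisymm hac hinv hper hinvp]
  ring
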